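/- Suppose à is a real k × n matrix with k ≤ n such that some subset of k of its columns forms the k × k identity matrix and every entry of à has absolute value at most 1. Then the spectral norm of à is at most sqrt(k(n-k)+1). -/

import Mathlib

open scoped Nat

/-- The Legendre polynomial of degree `l`, via Rodrigues' formula. -/
noncomputable def legendreP (l : ℕ) : ℝ → ℝ := fun x =>
  (1 / (2 ^ l * (l ! : ℝ))) * iteratedDeriv l (fun y : ℝ => (y ^ 2 - 1) ^ l) x

/-- The normalized associated Legendre function `P̄_l^m`. -/
noncomputable def nalf (m l : ℕ) : ℝ → ℝ := fun x =>
  Real.sqrt ((2 * l + 1) / 2 * ((l - m)! : ℝ) / ((l + m)! : ℝ)) *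
    (1 - x ^ 2) ^ ((m : ℝ) / 2) * iteratedDeriv m (legendreP l) x

/-- The spectral (l²-operator) norm of a real matrix. -/
noncomputable def specNorm {α β : Type*} [Fintype α] [Fintype β] [DecidableEq α] [DecidableEq β]
    (A : Matrix α β ℝ) : ℝ :=
  ‖LinearMap.toContinuousLinearMap (Matrix.toEuclideanLin A)‖

/-- The singular values of a real matrix, listed in decreasing order. -/
noncomputable def singularValues {p q : ℕ} (A : Matrix (Fin p) (Fin q) ℝ) : List ℝ :=
  List.insertionSort (· ≥ ·)
    (List.ofFn fun i => Real.sqrt ((show (Matrix.transpose A * A).IsHermitian by simpa [Matrix.conjTranspose_eq_transpose_of_trivial] using Matrix.isHermitian_conjTranspose_mul_self A).eigenvalues i))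

noncomputable def ccoef (m l : ℕ) : ℝ :=
  Real.sqrt ((((l : ℝ) - m + 1) * ((l : ℝ) - m + 2) * ((l : ℝ) + m + 1) * ((l : ℝ) + m + 2)) /
    ((2 * (l : ℝ) + 1) * (2 * (l : ℝ) + 3) ^ 2 * (2 * (l : ℝ) + 5)))

noncomputable def dcoef (m l : ℕ) : ℝ :=
  (2 * (l : ℝ) * ((l : ℝ) + 1) - 2 * (m : ℝ) ^ 2 - 1) /
    ((2 * (l : ℝ) - 1) * (2 * (l : ℝ) + 3))

/-!
Up to a permutation of columns `Ã = [I | B]` with `|B i j| ≤ 1`, so for `x = (u, w)` we get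
`Ãx = u + Bw`. Cauchy–Schwarz on each row of `B` gives `‖Bw‖² ≤ t‖w‖²` with `t = k(n-k)`, and
Cauchy–Schwarz once more gives `‖u + Bw‖² ≤ (1 + t)(‖u‖² + ‖w‖²) = (1 + t)‖x‖²`.
-/

open Finset Matrix

theorem specNorm_le_sqrt_of_sum_sq_mulVec_le {m n : Type*} [Fintype m] [Fintype n]
    [DecidableEq m] [DecidableEq n] (A : Matrix m n ℝ) {c : ℝ}
    (h : ∀ x, ∑ i, (A *ᵥ x) i ^ 2 ≤ c * ∑ j, x j ^ 2) : specNorm A ≤ √c := by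
  refine ContinuousLinearMap.opNorm_le_bound _ (Real.sqrt_nonneg c) fun x => ?_
  rw [LinearMap.coe_toContinuousLinearMap', EuclideanSpace.norm_eq, EuclideanSpace.norm_eq,
    ← Real.sqrt_mul' _ (by positivity)]
  simp only [Real.norm_eq_abs, sq_abs]
  exact Real.sqrt_le_sqrt (h x)

theorem sum_add_sq_le_of_sum_sq_le {ι : Type*} (s : Finset ι) (p q : ι → ℝ) {S t : ℝ}
    (hS : 0 ≤ S) (ht : 0 ≤ t) (hq : ∑ i ∈ s, q i ^ 2 ≤ t * S) :
    ∑ i ∈ s, (p i + q i) ^ 2 ≤ (1 + t) * (∑ i ∈ s, p i ^ 2 + S) := by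
  have hexpand : ∑ i ∈ s, (p i + q i) ^ 2 =
      ∑ i ∈ s, p i ^ 2 + 2 * ∑ i ∈ s, p i * q i + ∑ i ∈ s, q i ^ 2 := by
    simp only [add_sq, sum_add_distrib, mul_sum, mul_assoc]
  have hP : 0 ≤ ∑ i ∈ s, p i ^ 2 := sum_nonneg fun i _ => sq_nonneg _
  have hcs : (∑ i ∈ s, p i * q i) ^ 2 ≤ t * (∑ i ∈ s, p i ^ 2) * S := by
    nlinarith [sum_mul_sq_le_sq_mul_sq s p q, mul_le_mul_of_nonneg_left hq hP]
  -- AM–GM: `2 ∑ p q ≤ 2 √(t P S) ≤ t P + S`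
  have hcross : 2 * ∑ i ∈ s, p i * q i ≤ t * ∑ i ∈ s, p i ^ 2 + S := by
    nlinarith [sq_nonneg (t * ∑ i ∈ s, p i ^ 2 - S), mul_nonneg ht hP]
  nlinarith

theorem sum_sq_sum_mul_le_of_abs_le {m n : Type*} [Fintype m] (A : Matrix m n ℝ)
    (hent : ∀ i j, |A i j| ≤ 1) (S : Finset n) (x : n → ℝ) :
    ∑ i, (∑ j ∈ S, A i j * x j) ^ 2 ≤ (Fintype.card m * #S : ℝ) * ∑ j ∈ S, x j ^ 2 := by
  have hrow : ∀ i, ∑ j ∈ S, A i j ^ 2 ≤ #S := fun i => by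
    simpa using sum_le_sum fun j (_ : j ∈ S) => (sq_le_one_iff_abs_le_one _).mpr (hent i j)
  calc ∑ i, (∑ j ∈ S, A i j * x j) ^ 2
      ≤ ∑ _i : m, (#S : ℝ) * ∑ j ∈ S, x j ^ 2 := sum_le_sum fun i _ =>
        (sum_mul_sq_le_sq_mul_sq S (A i) x).trans
          (mul_le_mul_of_nonneg_right (hrow i) (sum_nonneg fun j _ => sq_nonneg _))
    _ = _ := by simp [mul_assoc]

section IdentityColumns

variable {m n : Type*} [Fintype m] [Fintype n] [DecidableEq m] [DecidableEq n]
  {g : m → n} (hg : Function.Injective g)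
include hg

theorem mulVec_apply_eq_add_sum_compl_image {R : Type*} [NonAssocSemiring R] (A : Matrix m n R)
    (hsub : A.submatrix id g = 1) (x : n → R) (i : m) :
    (A *ᵥ x) i = x (g i) + ∑ j ∈ (univ.image g)ᶜ, A i j * x j := by
  rw [mulVec, dotProduct, ← sum_add_sum_compl (univ.image g), sum_image hg.injOn]
  congr 1
  have hcol : ∀ i', A i (g i') = (1 : Matrix m m R) i i' := fun i' => congrFun (congrFun hsub i) i'
  simp [hcol, one_apply]

theorem sum_sq_mulVec_le_of_submatrix_eq_one (A : Matrix m n ℝ) (hsub : A.submatrix id g = 1)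
    (hent : ∀ i j, |A i j| ≤ 1) (x : n → ℝ) :
    ∑ i, (A *ᵥ x) i ^ 2 ≤
      ((Fintype.card m * (Fintype.card n - Fintype.card m) + 1 : ℕ) : ℝ) * ∑ j, x j ^ 2 := by
  set T := univ.image g
  have hcard : #Tᶜ = Fintype.card n - Fintype.card m := by
    rw [card_compl, card_image_of_injective _ hg, card_univ]
  have hsplit : ∑ j, x j ^ 2 = ∑ i, x (g i) ^ 2 + ∑ j ∈ Tᶜ, x j ^ 2 := by
    rw [← sum_add_sum_compl T, sum_image hg.injOn]
  have hrest := sum_sq_sum_mul_le_of_abs_le A hent Tᶜ x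
  rw [hcard] at hrest
  simp only [mulVec_apply_eq_add_sum_compl_image hg A hsub x]
  rw [hsplit, Nat.cast_add_one, add_comm _ (1 : ℝ)]
  exact sum_add_sq_le_of_sum_sq_le univ _ _ (sum_nonneg fun j _ => sq_nonneg _) (by positivity)
    (by exact_mod_cast hrest)

end IdentityColumns

theorem interp_matrix_norm_bound_one_general (k n : ℕ)
    (At : Matrix (Fin k) (Fin n) ℝ)
    (hid : ∃ g : Fin k → Fin n, Function.Injective g ∧ At.submatrix id g = 1)
    (hent : ∀ i j, |At i j| ≤ 1) :
    specNorm At ≤ Real.sqrt ((k * (n - k) + 1 : ℕ)) := by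
  obtain ⟨g, hg, hsub⟩ := hid
  refine specNorm_le_sqrt_of_sum_sq_mulVec_le At fun x => ?_
  simpa only [Fintype.card_fin] using sum_sq_mulVec_le_of_submatrix_eq_one hg At hsub hent x

theorem interp_matrix_norm_bound_one (k n : ℕ) (hkn : k ≤ n)
    (At : Matrix (Fin k) (Fin n) ℝ)
    (hid : ∃ g : Fin k → Fin n, Function.Injective g ∧ At.submatrix id g = 1)
    (hent : ∀ i j, |At i j| ≤ 1) :
    specNorm At ≤ Real.sqrt ((k * (n - k) + 1 : ℕ)) :=
  interp_matrix_norm_bound_one_general k n At hid hent
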